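/- arXiv:cs/0411027 — 3 statements merged into one kernel-verified Lean document; each statement's English description precedes it below -/
import Mathlib

section
/- For each fixed natural number j ≥ 0 and any bounded function ω : ℕ → ℝ (in particular ω(n) = O(1)), the quantity n · φ(j+1, ln n + j·ln ln n + ω(n)), where φ(x, y) = e^{-y} Σ_{i=0}^{x} y^i / i!, is bounded away from 0 as n → ∞. -/
open Real Filter Finset
open scoped Nat

/-!
Write `L = log n` and `y = L + j log L + ω n`. Then `n e^{-y} = e^{-ω n} / L^j` exactly, and the
Poisson sum is at least its `i = j` term `y^j / j!`. Since `ω` is bounded, `y ≥ L / 2` for large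
`n`, so the product is at least `e^{-C} (L/2)^j / (L^j j!) = e^{-C} / (2^j j!)`.
-/

lemma pow_div_factorial_le_sum_range {y : ℝ} (hy : 0 ≤ y) {j m : ℕ} (hjm : j < m) :
    y ^ j / (j ! : ℝ) ≤ ∑ i ∈ range m, y ^ i / (i ! : ℝ) :=
  single_le_sum (f := fun i => y ^ i / (i ! : ℝ)) (fun _ _ => by positivity) (mem_range.mpr hjm)

lemma mul_exp_neg_log_add_mul_log_log {x : ℝ} (hx : 0 < x) (hlogx : 0 < log x) (j : ℕ) (w : ℝ) :
    x * exp (-(log x + j * log (log x) + w)) = exp (-w) / log x ^ j := by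
  have hpow : log x ^ j = exp (j * log (log x)) := by rw [exp_nat_mul, exp_log hlogx]
  rw [hpow, eq_div_iff (exp_pos _).ne', ← exp_log hx, ← exp_add, ← exp_add, exp_log hx]
  ring_nf

lemma exp_neg_div_two_pow_mul_factorial_le {L y w C : ℝ} (hL : 0 < L) (hy : L / 2 ≤ y)
    (hw : w ≤ C) (j : ℕ) :
    exp (-C) / (2 ^ j * (j ! : ℝ)) ≤ exp (-w) / L ^ j * (y ^ j / (j ! : ℝ)) := by
  calc exp (-C) / (2 ^ j * (j ! : ℝ))
      = exp (-C) / L ^ j * ((L / 2) ^ j / (j ! : ℝ)) := by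
        rw [div_pow]
        field_simp
    _ ≤ exp (-w) / L ^ j * (y ^ j / (j ! : ℝ)) := by
        gcongr

/-- For fixed `j` and bounded `ω`, `n · φ(j+1, ln n + j ln ln n + ω(n))` is bounded
away from `0` as `n → ∞`, where `φ(x,y) = e^{-y} Σ_{i≤x} y^i/i!`. -/
theorem multiple_coverage_converse (j : ℕ) (ω : ℕ → ℝ)
    (hω : ∃ C : ℝ, ∀ n : ℕ, |ω n| ≤ C) :
    ∃ ε : ℝ, 0 < ε ∧ ∀ᶠ n : ℕ in atTop,
      ε ≤ (n : ℝ) * (Real.exp (-(Real.log n + j * Real.log (Real.log n) + ω n)) *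
        ∑ i ∈ Finset.range (j + 2),
          (Real.log n + j * Real.log (Real.log n) + ω n) ^ i / (Nat.factorial i : ℝ)) := by
  obtain ⟨C, hC⟩ := hω
  refine ⟨exp (-C) / (2 ^ j * (j ! : ℝ)), by positivity, ?_⟩
  have hlog : Tendsto (fun n : ℕ => log n) atTop atTop :=
    tendsto_log_atTop.comp tendsto_natCast_atTop_atTop
  filter_upwards [hlog.eventually_ge_atTop (max (2 * C) 1)] with n hLn
  set L := log (n : ℝ)
  have hL1 : 1 ≤ L := (le_max_right _ _).trans hLn
  have hL0 : 0 < L := one_pos.trans_le hL1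
  have hn0 : (0 : ℝ) < n := by
    rcases Nat.eq_zero_or_pos n with rfl | hn
    · simp [L] at hL0
    · exact_mod_cast hn
  obtain ⟨hωl, hωu⟩ := abs_le.mp (hC n)
  have hy : L / 2 ≤ L + j * log L + ω n := by
    have : 0 ≤ (j : ℝ) * log L := mul_nonneg j.cast_nonneg (log_nonneg hL1)
    linarith [(le_max_left _ _).trans hLn]
  rw [← mul_assoc, mul_exp_neg_log_add_mul_log_log hn0 hL0]
  exact (exp_neg_div_two_pow_mul_factorial_le hL0 hy hωu j).trans <| by
    gcongr
    exact pow_div_factorial_le_sum_range (by linarith) (by omega)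
end

section
/- Let ℓ > 11/5 be a real constant and let k(n) = (π n / (6(1+ℓ) ln n))^{1/3}. Then (1 - (1 - 5(1+ℓ)ln n/(16n))^n)^{6 k(n)³} tends to 1 as n → ∞. -/
/-!
Write `c = 5(1+ℓ)/16 > 1`, `qₙ = (1 - c ln n / n)ⁿ` and `Eₙ = 6 k(n)³ = π n / ((1+ℓ) ln n)`.
From `1 - x ≤ e⁻ˣ` we get `qₙ ≤ n⁻ᶜ`, so `Eₙ qₙ = O(n¹⁻ᶜ / ln n) → 0`, and Bernoulli's
inequality squeezes `(1 - qₙ)^Eₙ` between `1 - Eₙ qₙ` and `1`.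
-/

open Real Filter Topology

theorem tendsto_one_sub_rpow_of_tendsto_mul_zero {ι : Type*} {l : Filter ι} {q E : ι → ℝ}
    (hq0 : ∀ᶠ i in l, 0 ≤ q i) (hq1 : ∀ᶠ i in l, q i ≤ 1) (hE : ∀ᶠ i in l, 1 ≤ E i)
    (h : Tendsto (fun i => E i * q i) l (𝓝 0)) :
    Tendsto (fun i => (1 - q i) ^ E i) l (𝓝 1) := by
  have hlower : Tendsto (fun i => 1 - E i * q i) l (𝓝 1) := by
    simpa using h.const_sub 1
  refine tendsto_of_tendsto_of_tendsto_of_le_of_le' hlower tendsto_const_nhds ?_ ?_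
  · filter_upwards [hq1, hE] with i hq1 hE
    simpa [sub_eq_add_neg] using one_add_mul_self_le_rpow_one_add (s := -q i) (by linarith) hE
  · filter_upwards [hq0, hq1, hE] with i hq0 hq1 hE
    exact rpow_le_one (by linarith) (by linarith) (by linarith)

theorem eventually_mul_log_div_le_one (a : ℝ) :
    ∀ᶠ n : ℕ in atTop, a * log n / n ≤ 1 := by
  have hlog : Tendsto (fun x : ℝ => log x / x) atTop (𝓝 0) := by
    simpa using tendsto_pow_log_div_mul_add_atTop 1 0 1 one_ne_zero
  have := (hlog.comp tendsto_natCast_atTop_atTop).const_mul a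
  rw [mul_zero] at this
  filter_upwards [this.eventually_le_const one_pos] with n hn
  simpa [mul_div_assoc] using hn

theorem one_sub_mul_log_div_pow_le_rpow_neg {c : ℝ} {n : ℕ} (hn : 0 < n)
    (h : c * log n / n ≤ 1) : (1 - c * log n / n) ^ n ≤ (n : ℝ) ^ (-c) := by
  have hn' : (0 : ℝ) < n := by exact_mod_cast hn
  calc (1 - c * log n / n) ^ n ≤ exp (-(c * log n / n)) ^ n := by
        gcongr
        linarith [add_one_le_exp (-(c * log n / n))]
    _ = (n : ℝ) ^ (-c) := by
        rw [← exp_nat_mul, rpow_def_of_pos hn']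
        congr 1
        field_simp

theorem tendsto_div_log_mul_one_sub_mul_log_div_pow {c : ℝ} (hc : 1 < c) :
    Tendsto (fun n : ℕ => n / log n * (1 - c * log n / n) ^ n) atTop (𝓝 0) := by
  have hnat := tendsto_natCast_atTop_atTop (R := ℝ)
  have hupper : Tendsto (fun n : ℕ => (n : ℝ) ^ (-(c - 1)) / log n) atTop (𝓝 0) :=
    ((tendsto_rpow_neg_atTop (by linarith)).comp hnat).div_atTop
      (tendsto_log_atTop.comp hnat)
  refine tendsto_of_tendsto_of_tendsto_of_le_of_le' tendsto_const_nhds hupper ?_ ?_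
  · filter_upwards [eventually_mul_log_div_le_one c] with n hn
    have : 0 ≤ 1 - c * log n / n := by linarith
    positivity
  · filter_upwards [eventually_mul_log_div_le_one c, eventually_gt_atTop 0] with n hle hn
    have hn' : (n : ℝ) ≠ 0 := by positivity
    calc n / log n * (1 - c * log n / n) ^ n ≤ n / log n * (n : ℝ) ^ (-c) := by
          gcongr
          exact one_sub_mul_log_div_pow_le_rpow_neg hn hle
      _ = (n : ℝ) ^ (-(c - 1)) / log n := by
          rw [neg_sub, sub_eq_neg_add, rpow_add_one hn']
          ring

theorem eventually_one_le_mul_div_log {a : ℝ} (ha : 0 < a) :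
    ∀ᶠ n : ℕ in atTop, 1 ≤ a * (n / log n) := by
  filter_upwards [eventually_mul_log_div_le_one a⁻¹, eventually_ge_atTop 2] with n hle hn
  have hlog : 0 < log n := log_pos (by exact_mod_cast hn)
  have hn' : (0 : ℝ) < n := by positivity
  rw [mul_div_assoc', le_div_iff₀ hlog, one_mul]
  rw [div_le_one hn', inv_mul_le_iff₀ ha] at hle
  exact hle

/-- For `ℓ > 11/5` and `k(n) = (πn/(6(1+ℓ)ln n))^{1/3}`,
`(1 - (1 - 5(1+ℓ)ln n/(16n))^n)^{6k(n)³} → 1`. -/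
theorem lens_nonempty_prob (ℓ : ℝ) (hℓ : 11 / 5 < ℓ) :
    Tendsto (fun n : ℕ =>
        (1 - (1 - 5 * (1 + ℓ) * Real.log n / (16 * n)) ^ n) ^
          (6 * ((π * n / (6 * (1 + ℓ) * Real.log n)) ^ ((1:ℝ)/3)) ^ 3 : ℝ))
      atTop (nhds 1) := by
  have hℓ1 : 0 < 1 + ℓ := by linarith
  set c : ℝ := 5 * (1 + ℓ) / 16 with hc_def
  have hc : 1 < c := by linarith
  have hq0 : ∀ᶠ n : ℕ in atTop, 0 ≤ (1 - c * log n / n) ^ n := by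
    filter_upwards [eventually_mul_log_div_le_one c] with n hn
    exact pow_nonneg (by linarith) n
  have hq1 : ∀ᶠ n : ℕ in atTop, (1 - c * log n / n) ^ n ≤ 1 := by
    filter_upwards [eventually_mul_log_div_le_one c] with n hn
    have : 0 ≤ c * log n / n := by positivity
    exact pow_le_one₀ (by linarith) (by linarith)
  have hprod : Tendsto (fun n : ℕ => π / (1 + ℓ) * (n / log n) * (1 - c * log n / n) ^ n)
      atTop (𝓝 0) := by
    simpa only [mul_assoc, mul_zero] using
      (tendsto_div_log_mul_one_sub_mul_log_div_pow hc).const_mul (π / (1 + ℓ))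
  refine (tendsto_one_sub_rpow_of_tendsto_mul_zero hq0 hq1
    (eventually_one_le_mul_div_log (by positivity)) hprod).congr fun n => ?_
  have hX : 0 ≤ π * n / (6 * (1 + ℓ) * log n) := div_nonneg (by positivity) (by positivity)
  rw [one_div, show (3 : ℝ) = (3 : ℕ) by norm_num, rpow_inv_natCast_pow hX three_ne_zero]
  have hx : 5 * (1 + ℓ) * log n / (16 * n) = c * log n / n := by rw [hc_def]; ring
  have hE : 6 * (π * n / (6 * (1 + ℓ) * log n)) = π / (1 + ℓ) * (n / log n) := by field_simp
  rw [hx, hE]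
end

section
/- As z → 0⁻, the branch W₋₁ of the Lambert W function satisfies W₋₁(z) = ln(-z) - ln(-ln(-z)) + O(ln(-ln(-z))/ln(-z)). -/
open Real Filter Asymptotics

/-- As `z → 0⁻`, `W₋₁(z) = ln(-z) - ln(-ln(-z)) + O(ln(-ln(-z))/ln(-z))`, where `W₋₁` is
the branch of the Lambert W function taking values in `(-∞, -1]`. -/
theorem lambert_Wm1_asymptotic (Wm1 : ℝ → ℝ)
    (hW : ∀ z : ℝ, -Real.exp (-1) ≤ z → z < 0 →
      Wm1 z ≤ -1 ∧ Wm1 z * Real.exp (Wm1 z) = z) :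
    (fun z : ℝ => Wm1 z - (Real.log (-z) - Real.log (-Real.log (-z))))
      =O[nhdsWithin 0 (Set.Iio (0:ℝ))]
      fun z : ℝ => Real.log (-Real.log (-z)) / Real.log (-z) := by
  rw [Asymptotics.isBigO_iff]
  refine ⟨2, ?_⟩
  have hmem : Set.Ioo (-Real.exp (-Real.exp 1)) 0 ∈ nhdsWithin (0:ℝ) (Set.Iio 0) :=
    Ioo_mem_nhdsLT_of_mem ⟨by simpa using Real.exp_pos (-Real.exp 1), le_refl 0⟩
  filter_upwards [hmem] with z hz
  obtain ⟨hz1, hz2⟩ := hz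
  have hznz : (0:ℝ) < -z := by linarith
  have he1 : (1:ℝ) < Real.exp 1 := by
    have := Real.exp_one_gt_d9; linarith
  have hzlb : -Real.exp (-1) ≤ z := by
    have h : Real.exp (-Real.exp 1) < Real.exp (-1) := Real.exp_lt_exp.2 (by linarith)
    linarith
  obtain ⟨hWle, hWeq⟩ := hW z hzlb hz2
  set W := Wm1 z with hWdef
  set L := Real.log (-z) with hLdef
  have hWpos : (1:ℝ) ≤ -W := by linarith
  have hlog : Real.log (-W) + W = L := by
    have h : (-W) * Real.exp W = -z := by rw [neg_mul, hWeq]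
    have h2 := congrArg Real.log h
    rwa [Real.log_mul (by linarith) (Real.exp_ne_zero W), Real.log_exp] at h2
  have hL : L < -Real.exp 1 := by
    have h : -z < Real.exp (-Real.exp 1) := by linarith
    have h2 : Real.log (-z) < Real.log (Real.exp (-Real.exp 1)) := Real.log_lt_log hznz h
    rwa [Real.log_exp] at h2
  have hLpos : (0:ℝ) < -L := by linarith
  have hlogL : (1:ℝ) ≤ Real.log (-L) := by
    have h : Real.log (Real.exp 1) < Real.log (-L) := Real.log_lt_log (Real.exp_pos 1) (by linarith)
    rw [Real.log_exp] at h
    exact h.le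
  have hlogWnn : 0 ≤ Real.log (-W) := Real.log_nonneg hWpos
  have hWgeL : -L ≤ -W := by linarith
  have hx : Real.log (-W) ≤ (-W) / Real.exp 1 := by
    have h := Real.log_le_sub_one_of_pos (x := (-W) / Real.exp 1) (by positivity)
    rw [Real.log_div (by linarith) (Real.exp_ne_zero 1), Real.log_exp] at h
    linarith
  have hW2L : -W ≤ 2 * (-L) := by
    have he2 : (2:ℝ) ≤ Real.exp 1 := by have := Real.exp_one_gt_d9; linarith
    have h1 : -W ≤ -L + (-W) / Real.exp 1 := by linarith
    have h2 : (-W) / Real.exp 1 ≤ (-W) / 2 := by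
      apply div_le_div_of_nonneg_left (by linarith) (by norm_num) he2
    linarith
  have hkey : Real.log (-W) - Real.log (-L) ≤ Real.log (-W) / (-L) := by
    have h := Real.log_le_sub_one_of_pos (x := (-W) / (-L)) (by positivity)
    rw [Real.log_div (by linarith) (ne_of_gt hLpos)] at h
    have h3 : (-W) / (-L) - 1 = Real.log (-W) / (-L) := by
      have h4 : Real.log (-W) = (-W) - (-L) := by linarith
      rw [h4, sub_div, div_self (ne_of_gt hLpos)]
    linarith
  have hlogWle : Real.log (-W) ≤ Real.log 2 + Real.log (-L) := by
    have h : Real.log (-W) ≤ Real.log (2 * (-L)) :=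
      (Real.log_le_log_iff (by linarith) (by linarith)).2 hW2L
    rwa [Real.log_mul two_ne_zero (ne_of_gt hLpos)] at h
  have hlog2 : Real.log 2 ≤ 1 := by
    have := Real.log_le_sub_one_of_pos (by norm_num : (0:ℝ) < 2); linarith
  have hupper : Real.log (-W) - Real.log (-L) ≤ 2 * (Real.log (-L) / (-L)) := by
    have h1 : Real.log (-W) / (-L) ≤ (2 * Real.log (-L)) / (-L) := by
      gcongr
      linarith
    calc Real.log (-W) - Real.log (-L) ≤ Real.log (-W) / (-L) := hkey
      _ ≤ (2 * Real.log (-L)) / (-L) := h1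
      _ = 2 * (Real.log (-L) / (-L)) := by ring
  have hlower : Real.log (-L) ≤ Real.log (-W) :=
    (Real.log_le_log_iff hLpos (by linarith)).2 hWgeL
  rw [Real.norm_eq_abs, Real.norm_eq_abs, abs_div,
    abs_of_nonneg (by linarith : (0:ℝ) ≤ Real.log (-L)),
    abs_of_neg (by linarith : L < 0), abs_le]
  have hE : W - (L - Real.log (-L)) = Real.log (-L) - Real.log (-W) := by linarith
  constructor
  · rw [hE]; linarith
  · rw [hE]; linarith
end
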